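/- Let 0 < ε ≤ 1/2 and c > 0, let n be sufficiently large, let G be an n-vertex simple graph with spectral radius λ = λ(G) ≥ c·n^{1/2+ε}, and let x be a nonnegative unit eigenvector of A(G) for λ. Set p = ⌈18^{(2−2ε)/ε}⌉ and η = 1/p², and let B₁ be a set of ⌈n/p⌉ vertices with the largest entries of x. If Σ_{v∈B₁} x_v² > 1/2 − η, then G contains a subgraph G₁ with n/p ≤ |V(G₁)| ≤ 3n/p and λ(G₁) ≥ λ/(6√p); in particular λ(G₁) ≥ c·|V(G₁)|^{1/2+ε}. -/

import Mathlib

/-- Number of edges of a simple graph. -/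
noncomputable def edgeCount {V : Type*} (G : SimpleGraph V) : ℕ := Nat.card G.edgeSet

/-- Average degree `2e(G)/|V(G)|` of a simple graph. -/
noncomputable def avgDeg {V : Type*} (G : SimpleGraph V) : ℝ :=
  2 * (edgeCount G : ℝ) / (Nat.card V : ℝ)

/-- Degree of a vertex. -/
noncomputable def deg {V : Type*} (G : SimpleGraph V) (v : V) : ℕ := Nat.card (G.neighborSet v)

/-- Minimum degree. -/
noncomputable def minDeg {V : Type*} [Fintype V] (G : SimpleGraph V) : ℕ :=
  sInf (Set.range (deg G))

/-- Maximum degree. -/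
noncomputable def maxDeg {V : Type*} [Fintype V] (G : SimpleGraph V) : ℕ :=
  Finset.univ.sup (deg G)

open Classical in
/-- Adjacency matrix over the reals. -/
noncomputable def adjMat {V : Type*} [Fintype V] (G : SimpleGraph V) : Matrix V V ℝ :=
  G.adjMatrix ℝ

/-- Spectral radius: the largest eigenvalue of the adjacency matrix. -/
noncomputable def specRad {V : Type*} [Fintype V] (G : SimpleGraph V) : ℝ :=
  sSup {μ : ℝ | ∃ x : V → ℝ, x ≠ 0 ∧ (adjMat G).mulVec x = μ • x}

/-- `H` is (isomorphic to) a subgraph of `G`, i.e. `H` is obtained from `G` by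
deleting vertices and/or edges. -/
def IsSubgraphOf {α β : Type*} (H : SimpleGraph α) (G : SimpleGraph β) : Prop :=
  ∃ f : α ↪ β, ∀ u v, H.Adj u v → G.Adj (f u) (f v)

/-- `G` contains no member of the family `𝓗` as a subgraph. -/
def HFree {n : ℕ} (𝓗 : Set (Σ m : ℕ, SimpleGraph (Fin m))) (G : SimpleGraph (Fin n)) : Prop :=
  ∀ H ∈ 𝓗, ¬ IsSubgraphOf H.2 G

/-- Turán number: maximum number of edges of an `n`-vertex `𝓗`-free graph. -/
noncomputable def exNum (𝓗 : Set (Σ m : ℕ, SimpleGraph (Fin m))) (n : ℕ) : ℕ :=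
  sSup {k : ℕ | ∃ G : SimpleGraph (Fin n), HFree 𝓗 G ∧ edgeCount G = k}

/-- Spectral Turán number: maximum spectral radius of an `n`-vertex `𝓗`-free graph. -/
noncomputable def spexNum (𝓗 : Set (Σ m : ℕ, SimpleGraph (Fin m))) (n : ℕ) : ℝ :=
  sSup {μ : ℝ | ∃ G : SimpleGraph (Fin n), HFree 𝓗 G ∧ specRad G = μ}

/-!
Let `y` be the Perron vector `x` cut down to `B₁`, with weight `W = ‖y‖² = ⟪y, x⟫`, and let
`s = A y`. Symmetry of `A` gives `⟪s, x⟫ = λ W`, so `(λ W)² ≤ ‖s‖²` by Cauchy–Schwarz. Outside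
`B₁`, a set `B₂` of `|B₁|` vertices maximizing `∑ s_v²` carries at least a `|B₁| / n` share of
that part of `‖s‖²`, hence `|B₁| ‖s‖² ≤ n ∑_{B₁ ∪ B₂} s_v²`. On `G₁ = G[B₁ ∪ B₂]` the vector
`s` restricted to `B₁ ∪ B₂` is `A(G₁) y`, and for nonnegative `y` the Rayleigh quotient of `G₁`
at `‖A(G₁) y‖ y + ‖y‖ A(G₁) y` shows `‖A(G₁) y‖ ≤ 2 λ(G₁) ‖y‖`. Altogether
`λ² W ≤ 4 p λ(G₁)²`, and `W > 1/2 - 1/p²` leaves room for the bound `λ ≤ 6 √p λ(G₁)`. The last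
claim is then arithmetic: `|V(G₁)| ≤ 3n/p` and `p^ε ≥ 18`.
-/

open Matrix

section Matrix

variable {V : Type*} [Fintype V]

theorem sq_dotProduct_le (v w : V → ℝ) : (v ⬝ᵥ w) ^ 2 ≤ (v ⬝ᵥ v) * (w ⬝ᵥ w) := by
  simpa only [dotProduct, sq] using Finset.sum_mul_sq_le_sq_mul_sq Finset.univ v w

theorem dotProduct_self_pos {v : V → ℝ} (hv : v ≠ 0) : 0 < v ⬝ᵥ v := by
  simpa using dotProduct_star_self_pos_iff.mpr hv

theorem Matrix.IsHermitian.exists_eigenvalue_forall_dotProduct_mulVec_le [Nonempty V]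
    {A : Matrix V V ℝ} (hA : A.IsHermitian) :
    ∃ M : ℝ, (∃ u ≠ 0, A *ᵥ u = M • u) ∧ ∀ y, y ⬝ᵥ A *ᵥ y ≤ M * (y ⬝ᵥ y) := by
  classical
  set T := toEuclideanLin A
  have hrayleigh (y : EuclideanSpace ℝ V) :
      RCLike.re (inner ℝ (T y) y) = y.ofLp ⬝ᵥ A *ᵥ y.ofLp := by
    simp [T, EuclideanSpace.inner_eq_star_dotProduct]
  have hnorm (y : EuclideanSpace ℝ V) : ‖y‖ ^ 2 = y.ofLp ⬝ᵥ y.ofLp := by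
    rw [EuclideanSpace.real_norm_sq_eq]
    simp [dotProduct, sq]
  let R (x : EuclideanSpace ℝ V) : ℝ := RCLike.re (inner ℝ (T x) x) / ‖x‖ ^ 2
  have hbdd : BddAbove (Set.range fun x : {x : EuclideanSpace ℝ V // x ≠ 0} => R x) := by
    refine ⟨‖LinearMap.toContinuousLinearMap T‖, ?_⟩
    rintro _ ⟨x, rfl⟩
    exact (le_abs_self _).trans ((LinearMap.toContinuousLinearMap T).rayleighQuotient_le_norm x)
  obtain ⟨v, hv⟩ := (isSymmetric_toEuclideanLin_iff.mpr hA).hasEigenvalue_iSup_of_finiteDimensional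
    |>.exists_hasEigenvector
  refine ⟨⨆ x : {x : EuclideanSpace ℝ V // x ≠ 0}, R x, ⟨v.ofLp, by simpa using hv.2, ?_⟩,
    fun y => ?_⟩
  · exact congrArg WithLp.ofLp (Module.End.mem_eigenspace_iff.mp hv.1)
  · rcases eq_or_ne y 0 with rfl | hy
    · simp
    have hR : R (WithLp.toLp 2 y) = y ⬝ᵥ A *ᵥ y / (y ⬝ᵥ y) := by
      simp only [R, hrayleigh, hnorm]
    have h := le_ciSup hbdd ⟨WithLp.toLp 2 y, by simpa using hy⟩
    rwa [hR, div_le_iff₀ (dotProduct_self_pos hy)] at h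

theorem Matrix.IsSymm.mulVec_dotProduct_mulVec_le_of_nonneg {A : Matrix V V ℝ} (hA : A.IsSymm)
    (hA0 : ∀ i j, 0 ≤ A i j) {M : ℝ} (hM : ∀ y, y ⬝ᵥ A *ᵥ y ≤ M * (y ⬝ᵥ y))
    {z : V → ℝ} (hz : 0 ≤ z) : A *ᵥ z ⬝ᵥ A *ᵥ z ≤ 4 * M ^ 2 * (z ⬝ᵥ z) := by
  rcases eq_or_ne z 0 with rfl | hz0
  · simp
  set w := A *ᵥ z
  have hA0' (y : V → ℝ) (hy : 0 ≤ y) : 0 ≤ A *ᵥ y := fun i =>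
    Finset.sum_nonneg fun j _ => mul_nonneg (hA0 i j) (hy j)
  have hw : 0 ≤ w := hA0' z hz
  have hr : 0 ≤ z ⬝ᵥ w := dotProduct_nonneg_of_nonneg hz hw
  have hq : 0 ≤ w ⬝ᵥ A *ᵥ w := dotProduct_nonneg_of_nonneg hw (hA0' w hw)
  have hZ : 0 ≤ z ⬝ᵥ z := dotProduct_nonneg_of_nonneg hz hz
  have hS : 0 ≤ w ⬝ᵥ w := dotProduct_nonneg_of_nonneg hw hw
  set a := √(z ⬝ᵥ z)
  set b := √(w ⬝ᵥ w)
  have ha2 : a ^ 2 = z ⬝ᵥ z := Real.sq_sqrt hZ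
  have hb2 : b ^ 2 = w ⬝ᵥ w := Real.sq_sqrt hS
  have ha : 0 < a := Real.sqrt_pos.mpr (dotProduct_self_pos hz0)
  rw [← ha2, ← hb2]
  rcases (show 0 ≤ b from Real.sqrt_nonneg _).eq_or_lt with hb | hb
  · rw [← hb, zero_pow two_ne_zero]
    positivity
  have hCS : z ⬝ᵥ w ≤ a * b := by
    rw [← Real.sqrt_mul hZ, Real.le_sqrt hr (mul_nonneg hZ hS)]
    exact sq_dotProduct_le z w
  -- the Rayleigh bound at `b • z + a • w`, where `a = ‖z‖` and `b = ‖A z‖`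
  have key : b ^ 2 * (z ⬝ᵥ w) + 2 * a * b * b ^ 2 + a ^ 2 * (w ⬝ᵥ A *ᵥ w) ≤
      M * (2 * a ^ 2 * b ^ 2 + 2 * a * b * (z ⬝ᵥ w)) := by
    have hzAw : z ⬝ᵥ A *ᵥ w = w ⬝ᵥ w := by
      rw [dotProduct_mulVec, ← mulVec_transpose, hA.eq, dotProduct_comm]
    have hAz : A *ᵥ z = w := rfl
    have := hM (b • z + a • w)
    simp only [hAz, mulVec_add, mulVec_smul, add_dotProduct, dotProduct_add, smul_dotProduct,
      dotProduct_smul, smul_eq_mul, hzAw, dotProduct_comm w z, ← ha2, ← hb2] at this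
    linear_combination this
  have h1 : b ^ 2 ≤ M * (a * b + z ⬝ᵥ w) := by
    refine le_of_mul_le_mul_left ?_ (by positivity : 0 < 2 * a * b)
    nlinarith [mul_nonneg (sq_nonneg b) hr, mul_nonneg (sq_nonneg a) hq]
  have hM0 : 0 ≤ M := by
    by_contra! h
    nlinarith [mul_nonneg (mul_nonneg ha.le hb.le) hr, mul_pos ha hb]
  have h2 : b ≤ 2 * M * a := by nlinarith [mul_le_mul_of_nonneg_left hCS hM0]
  nlinarith [pow_le_pow_left₀ hb.le h2 2]

theorem Matrix.IsSymm.sq_eigenvalue_mul_dotProduct_le {A : Matrix V V ℝ} (hA : A.IsSymm)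
    {μ : ℝ} {x : V → ℝ} (hx : A *ᵥ x = μ • x) (hx1 : x ⬝ᵥ x = 1) (y : V → ℝ) :
    (μ * (y ⬝ᵥ x)) ^ 2 ≤ A *ᵥ y ⬝ᵥ A *ᵥ y := by
  have hsymm : A *ᵥ y ⬝ᵥ x = μ * (y ⬝ᵥ x) := by
    rw [dotProduct_comm, dotProduct_mulVec, ← mulVec_transpose, hA.eq, hx, smul_dotProduct,
      smul_eq_mul, dotProduct_comm]
  simpa [hsymm, hx1] using sq_dotProduct_le (A *ᵥ y) x

end Matrix

namespace Finset

variable {ι : Type*} [DecidableEq ι]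

theorem exists_subset_card_eq_mul_sum_le (s : Finset ι) (f : ι → ℝ) {k : ℕ} (hk : k ≤ s.card) :
    ∃ t ⊆ s, t.card = k ∧ k * ∑ i ∈ s, f i ≤ s.card * ∑ i ∈ t, f i := by
  obtain ⟨t, ht, hmax⟩ := (s.powersetCard k).exists_max_image (fun t => ∑ i ∈ t, f i)
    (powersetCard_nonempty.mpr hk)
  obtain ⟨hts, htk⟩ := mem_powersetCard.mp ht
  have hexch : ∀ i ∈ s \ t, ∀ j ∈ t, f i ≤ f j := by
    intro i hi j hj
    obtain ⟨his, hit⟩ := mem_sdiff.mp hi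
    have hi' : i ∉ t.erase j := fun h => hit (mem_of_mem_erase h)
    have hmem : insert i (t.erase j) ∈ s.powersetCard k := by
      refine mem_powersetCard.mpr ⟨insert_subset his ((erase_subset j t).trans hts), ?_⟩
      rw [card_insert_of_notMem hi', card_erase_of_mem hj, htk]
      have : 0 < k := htk ▸ card_pos.mpr ⟨j, hj⟩
      omega
    have := hmax _ hmem
    rw [sum_insert hi', ← sum_erase_add t f hj] at this
    linarith
  have hout : ∀ i ∈ s \ t, k * f i ≤ ∑ j ∈ t, f j := fun i hi => by
    simpa [htk] using sum_le_sum (hexch i hi)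
  refine ⟨t, hts, htk, ?_⟩
  calc (k : ℝ) * ∑ i ∈ s, f i = k * ∑ i ∈ s \ t, f i + k * ∑ i ∈ t, f i := by
        rw [← sum_sdiff hts, mul_add]
    _ ≤ (s \ t).card * ∑ j ∈ t, f j + k * ∑ i ∈ t, f i := by
        grw [mul_sum, sum_le_sum hout, sum_const, nsmul_eq_mul]
    _ = s.card * ∑ i ∈ t, f i := by
        rw [← add_mul, ← card_sdiff_add_card_eq_card hts, htk]
        push_cast; ring

theorem exists_disjoint_card_eq_mul_sum_le [Fintype ι]
    (B₁ : Finset ι) {f : ι → ℝ} (hf : 0 ≤ f) (h2 : 2 * B₁.card ≤ Fintype.card ι) :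
    ∃ B₂, Disjoint B₁ B₂ ∧ B₂.card = B₁.card ∧
      B₁.card * ∑ i, f i ≤ Fintype.card ι * ∑ i ∈ B₁ ∪ B₂, f i := by
  obtain ⟨B₂, hB₂, hcard, hsel⟩ :=
    B₁ᶜ.exists_subset_card_eq_mul_sum_le f (k := B₁.card) (by rw [card_compl]; omega)
  refine ⟨B₂, disjoint_of_subset_right hB₂ disjoint_compl_right, hcard, ?_⟩
  have hle : ∀ t ⊆ B₁ ∪ B₂, ∑ i ∈ t, f i ≤ ∑ i ∈ B₁ ∪ B₂, f i := fun t ht =>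
    sum_le_sum_of_subset_of_nonneg ht fun i _ _ => hf i
  calc (B₁.card : ℝ) * ∑ i, f i = B₁.card * ∑ i ∈ B₁, f i + B₁.card * ∑ i ∈ B₁ᶜ, f i := by
        rw [← sum_add_sum_compl B₁, mul_add]
    _ ≤ B₁.card * ∑ i ∈ B₁ ∪ B₂, f i + B₁ᶜ.card * ∑ i ∈ B₁ ∪ B₂, f i := by
        grw [hsel, hle B₁ subset_union_left, hle B₂ subset_union_right]
    _ = Fintype.card ι * ∑ i ∈ B₁ ∪ B₂, f i := by
        rw [← add_mul, ← card_add_card_compl B₁]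
        push_cast; ring

end Finset

section Graph

variable {V : Type*} [Fintype V] (G : SimpleGraph V)

theorem isSymm_adjMat : (adjMat G).IsSymm := by
  classical exact G.isSymm_adjMatrix

theorem adjMat_apply_nonneg (u v : V) : 0 ≤ adjMat G u v := by
  classical
  simp only [adjMat, SimpleGraph.adjMatrix_apply]
  split_ifs <;> norm_num

theorem dotProduct_adjMat_mulVec_le_specRad (y : V → ℝ) :
    y ⬝ᵥ adjMat G *ᵥ y ≤ specRad G * (y ⬝ᵥ y) := by
  classical
  cases isEmpty_or_nonempty V
  · simp [dotProduct]
  obtain ⟨M, hMeig, hM⟩ :=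
    ((isHermitian_iff_isSymm).mpr (isSymm_adjMat G)).exists_eigenvalue_forall_dotProduct_mulVec_le
  have hmax : IsGreatest {μ | ∃ x : V → ℝ, x ≠ 0 ∧ adjMat G *ᵥ x = μ • x} M := by
    refine ⟨hMeig, ?_⟩
    rintro μ ⟨u, hu, hAu⟩
    have := hM u
    rw [hAu, dotProduct_smul, smul_eq_mul] at this
    exact le_of_mul_le_mul_right this (dotProduct_self_pos hu)
  rw [specRad, hmax.csSup_eq]
  exact hM y

theorem specRad_nonneg [Nonempty V] : 0 ≤ specRad G := by
  classical
  obtain ⟨v⟩ := ‹Nonempty V›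
  have h := dotProduct_adjMat_mulVec_le_specRad G (Pi.single v 1)
  simpa [mulVec_single_one, adjMat] using h

theorem adjMat_comap_mulVec {W : Type*} [Fintype W] (f : W ↪ V) {y : V → ℝ}
    (hy : ∀ v ∉ Set.range f, y v = 0) (w : W) :
    (adjMat (G.comap f) *ᵥ (y ∘ f)) w = (adjMat G *ᵥ y) (f w) := by
  classical
  refine Fintype.sum_of_injective f f.injective _ _ (fun v hv => ?_) fun _ => ?_
  · simp [hy v hv]
  · simp [adjMat, SimpleGraph.adjMatrix_apply]

theorem sum_sq_adjMat_mulVec_le_comap {W : Type*} [Fintype W] (f : W ↪ V) {y : V → ℝ}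
    (hy0 : 0 ≤ y) (hy : ∀ v ∉ Set.range f, y v = 0) :
    ∑ w, (adjMat G *ᵥ y) (f w) ^ 2 ≤ 4 * specRad (G.comap f) ^ 2 * (y ⬝ᵥ y) := by
  have hyy : (y ∘ f) ⬝ᵥ (y ∘ f) = y ⬝ᵥ y :=
    Fintype.sum_of_injective f f.injective _ _ (fun v hv => by simp [hy v hv]) fun _ => rfl
  have h := (isSymm_adjMat (G.comap f)).mulVec_dotProduct_mulVec_le_of_nonneg
    (adjMat_apply_nonneg _) (dotProduct_adjMat_mulVec_le_specRad _) (z := y ∘ f)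
    fun w => hy0 (f w)
  rw [hyy] at h
  simpa only [dotProduct, adjMat_comap_mulVec G f hy, sq] using h

theorem exists_comap_card_mul_sq_eigenvalue_le {x : V → ℝ} (hx0 : 0 ≤ x)
    (hx1 : ∑ v, x v ^ 2 = 1) {μ : ℝ} (hx : adjMat G *ᵥ x = μ • x) (B₁ : Finset V)
    (h2 : 2 * B₁.card ≤ Fintype.card V) :
    ∃ (m : ℕ) (f : Fin m ↪ V), m = 2 * B₁.card ∧
      B₁.card * (μ ^ 2 * ∑ v ∈ B₁, x v ^ 2) ≤ 4 * Fintype.card V * specRad (G.comap f) ^ 2 := by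
  classical
  set W := ∑ v ∈ B₁, x v ^ 2
  set y : V → ℝ := fun v => if v ∈ B₁ then x v else 0
  set s := adjMat G *ᵥ y
  have hy0 : 0 ≤ y := fun v => by
    simp only [y]
    split_ifs
    exacts [hx0 v, le_rfl]
  have hyx : y ⬝ᵥ x = W := by simp [y, W, dotProduct, ite_mul, sq]
  have hyy : y ⬝ᵥ y = W := by simp [y, W, dotProduct, ite_mul, sq]
  obtain ⟨B₂, hdisj, hcard, hsel⟩ :=
    B₁.exists_disjoint_card_eq_mul_sum_le (f := fun v => s v ^ 2) (fun v => sq_nonneg _) h2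
  set B := B₁ ∪ B₂
  let f : Fin B.card ↪ V := B.equivFin.symm.toEmbedding.trans (Function.Embedding.subtype _)
  have hf : ∀ v ∉ Set.range f, y v = 0 := fun v hv => if_neg fun hvB₁ =>
    hv ⟨B.equivFin ⟨v, Finset.mem_union_left _ hvB₁⟩, by simp [f]⟩
  have hsum : ∑ w, s (f w) ^ 2 = ∑ v ∈ B, s v ^ 2 :=
    (B.equivFin.symm.sum_comp (fun v : B => s v ^ 2)).trans (B.sum_coe_sort fun v => s v ^ 2)
  refine ⟨B.card, f, by rw [Finset.card_union_of_disjoint hdisj, hcard, two_mul], ?_⟩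
  have hspec := sum_sq_adjMat_mulVec_le_comap G f hy0 hf
  have hCS := (isSymm_adjMat G).sq_eigenvalue_mul_dotProduct_le hx
    (by simpa [dotProduct, sq] using hx1) y
  rw [hsum, hyy] at hspec
  rw [hyx, show s ⬝ᵥ s = ∑ v, s v ^ 2 by simp only [dotProduct, sq]] at hCS
  have hchain : W * (B₁.card * (μ ^ 2 * W)) ≤
      W * (4 * Fintype.card V * specRad (G.comap f) ^ 2) :=
    calc W * (B₁.card * (μ ^ 2 * W)) = B₁.card * (μ * W) ^ 2 := by ring
      _ ≤ B₁.card * ∑ v, s v ^ 2 := by gcongr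
      _ ≤ Fintype.card V * ∑ v ∈ B, s v ^ 2 := hsel
      _ ≤ Fintype.card V * (4 * specRad (G.comap f) ^ 2 * W) := by gcongr
      _ = W * (4 * Fintype.card V * specRad (G.comap f) ^ 2) := by ring
  rcases (show 0 ≤ W from Finset.sum_nonneg fun v _ => sq_nonneg (x v)).eq_or_lt with hW | hW
  · rw [← hW, mul_zero, mul_zero]
    positivity
  · exact le_of_mul_le_mul_left hchain hW

end Graph

theorem eighteen_le_of_rpow_le {ε p : ℝ} (hε0 : 0 < ε) (hε1 : ε ≤ 1 / 2)
    (hp : (18 : ℝ) ^ ((2 - 2 * ε) / ε) ≤ p) : 18 ≤ p ∧ 18 ≤ p ^ ε := by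
  have hexp : 1 ≤ (2 - 2 * ε) / ε := by rw [le_div_iff₀ hε0]; linarith
  have h18 : (18 : ℝ) ≤ 18 ^ ((2 - 2 * ε) / ε) := by
    simpa using Real.rpow_le_rpow_of_exponent_le (by norm_num : (1 : ℝ) ≤ 18) hexp
  refine ⟨h18.trans hp, ?_⟩
  calc (18 : ℝ) ≤ 18 ^ (2 - 2 * ε) := by
        simpa using Real.rpow_le_rpow_of_exponent_le (by norm_num : (1 : ℝ) ≤ 18)
          (by linarith : 1 ≤ 2 - 2 * ε)
    _ = (18 ^ ((2 - 2 * ε) / ε)) ^ ε := by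
        rw [← Real.rpow_mul (by norm_num), div_mul_cancel₀ _ hε0.ne']
    _ ≤ p ^ ε := Real.rpow_le_rpow (by positivity) hp hε0.le

theorem ceil_div_bounds {n p : ℕ} (hp : 4 ≤ p) (hn : 2 * p ≤ n) :
    (n : ℝ) ≤ p * ⌈(n : ℝ) / p⌉₊ ∧ (n : ℝ) / p ≤ (2 * ⌈(n : ℝ) / p⌉₊ : ℕ) ∧
      ((2 * ⌈(n : ℝ) / p⌉₊ : ℕ) : ℝ) ≤ 3 * n / p ∧ 2 * ⌈(n : ℝ) / p⌉₊ ≤ n := by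
  have hp' : (4 : ℝ) ≤ p := by exact_mod_cast hp
  have hn' : 2 * (p : ℝ) ≤ n := by exact_mod_cast hn
  have hle := Nat.le_ceil ((n : ℝ) / p)
  have hlt := Nat.ceil_lt_add_one (by positivity : 0 ≤ (n : ℝ) / p)
  have h2 : 2 ≤ (n : ℝ) / p := by rw [le_div_iff₀ (by positivity)]; linarith
  have h4 : 4 * ((n : ℝ) / p) ≤ n := by
    rw [← mul_div_assoc, div_le_iff₀ (by positivity)]; nlinarith
  refine ⟨by rwa [div_le_iff₀ (by positivity), mul_comm] at hle, by push_cast; linarith,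
    by push_cast; rw [mul_div_assoc]; linarith, ?_⟩
  exact_mod_cast (by linarith : (2 * ⌈(n : ℝ) / p⌉₊ : ℝ) ≤ n)

theorem div_six_mul_sqrt_le {p b n W l l₁ : ℝ} (hp : 2 ≤ p) (hb : 0 < b) (hn : n ≤ p * b)
    (hW : 1 / 2 - 1 / p ^ 2 < W) (hl₁ : 0 ≤ l₁) (h : b * (l ^ 2 * W) ≤ 4 * n * l₁ ^ 2) :
    l / (6 * √p) ≤ l₁ := by
  have hW' : 1 / 4 ≤ W := by
    have : 1 / p ^ 2 ≤ 1 / 4 := by gcongr; nlinarith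
    linarith
  have hlW : l ^ 2 * W ≤ 4 * p * l₁ ^ 2 := by
    refine le_of_mul_le_mul_left ?_ hb
    nlinarith [sq_nonneg l₁]
  have hsq : l ^ 2 ≤ (6 * √p * l₁) ^ 2 := by
    rw [mul_pow, mul_pow, Real.sq_sqrt (by linarith)]
    nlinarith [sq_nonneg l, sq_nonneg l₁]
  rw [div_le_iff₀ (by positivity), mul_comm]
  exact (le_abs_self l).trans (abs_le_of_sq_le_sq hsq (by positivity))

theorem rpow_three_mul_div_le {n p ε : ℝ} (hn : 0 ≤ n) (hp : 0 < p) (hε1 : ε ≤ 1 / 2)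
    (h18 : 18 ≤ p ^ ε) :
    (3 * n / p) ^ (1 / 2 + ε) ≤ n ^ (1 / 2 + ε) / (6 * √p) := by
  have h3 : (3 : ℝ) ^ (1 / 2 + ε) ≤ 3 := by
    simpa using Real.rpow_le_rpow_of_exponent_le (by norm_num : (1 : ℝ) ≤ 3)
      (by linarith : 1 / 2 + ε ≤ 1)
  have hp' : p ^ (1 / 2 + ε) = √p * p ^ ε := by
    rw [Real.rpow_add hp, Real.sqrt_eq_rpow]
  rw [Real.div_rpow (by positivity) hp.le, Real.mul_rpow (by norm_num) hn, hp',
    div_le_div_iff₀ (by positivity) (by positivity)]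
  have hsqrt : 0 ≤ √p := Real.sqrt_nonneg p
  have hnα : 0 ≤ n ^ (1 / 2 + ε) := by positivity
  nlinarith [mul_le_mul_of_nonneg_right h3 (mul_nonneg hnα hsqrt),
    mul_le_mul_of_nonneg_left h18 (mul_nonneg hnα hsqrt)]

/-- type 2 case: if the top `⌈n/p⌉` entries of the Perron eigenvector
carry total weight more than `1/2 - η`, then `G` has a subgraph `G₁` with
`n/p ≤ |V(G₁)| ≤ 3n/p` and `λ(G₁) ≥ λ/(6√p) ≥ c|V(G₁)|^{1/2+ε}`. -/
theorem stmt12 (ε c : ℝ) (hε0 : 0 < ε) (hε1 : ε ≤ 1/2) (hc : 0 < c) :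
    ∃ N : ℕ, ∀ n : ℕ, N ≤ n → ∀ G : SimpleGraph (Fin n), ∀ x : Fin n → ℝ,
      (∀ v, 0 ≤ x v) → (∑ v, x v ^ 2 = 1) →
      c * (n : ℝ) ^ ((1:ℝ)/2 + ε) ≤ specRad G →
      (adjMat G).mulVec x = specRad G • x →
      ∀ p : ℕ, p = ⌈(18 : ℝ) ^ ((2 - 2 * ε) / ε)⌉₊ →
      ∀ B₁ : Finset (Fin n), B₁.card = ⌈(n : ℝ) / (p : ℝ)⌉₊ →
      (∀ u ∈ B₁, ∀ v ∉ B₁, x v ≤ x u) →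
      1/2 - 1 / (p : ℝ) ^ 2 < ∑ v ∈ B₁, x v ^ 2 →
      ∃ (m : ℕ) (G₁ : SimpleGraph (Fin m)), IsSubgraphOf G₁ G ∧
        (n : ℝ) / (p : ℝ) ≤ (m : ℝ) ∧ (m : ℝ) ≤ 3 * (n : ℝ) / (p : ℝ) ∧
        specRad G / (6 * Real.sqrt (p : ℝ)) ≤ specRad G₁ ∧
        c * (m : ℝ) ^ ((1:ℝ)/2 + ε) ≤ specRad G₁ := by
  refine ⟨2 * ⌈(18 : ℝ) ^ ((2 - 2 * ε) / ε)⌉₊, ?_⟩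
  intro n hn G x hx0 hx1 hrad hx p hp B₁ hB₁ _ hW
  obtain ⟨hp18, hpε⟩ := eighteen_le_of_rpow_le hε0 hε1 (hp ▸ Nat.le_ceil _)
  have hp4 : 4 ≤ p := by exact_mod_cast (by linarith : (4 : ℝ) ≤ p)
  rw [← hp] at hn
  obtain ⟨hnb, hm_low, hm_up, h2b⟩ := ceil_div_bounds hp4 hn
  rw [← hB₁] at hnb hm_low hm_up h2b
  obtain ⟨m, f, rfl, hf⟩ :=
    exists_comap_card_mul_sq_eigenvalue_le G hx0 hx1 hx B₁ (by simpa using h2b)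
  have hb : 0 < B₁.card := by
    rw [hB₁, Nat.ceil_pos]; exact div_pos (by exact_mod_cast (by omega : 0 < n)) (by linarith)
  have : Nonempty (Fin (2 * B₁.card)) := ⟨⟨0, by omega⟩⟩
  have hrad₁ : specRad G / (6 * √p) ≤ specRad (G.comap f) :=
    div_six_mul_sqrt_le (by linarith) (by exact_mod_cast hb) hnb hW (specRad_nonneg _)
      (by simpa using hf)
  refine ⟨_, G.comap f, ⟨f, fun _ _ h => h⟩, hm_low, hm_up, hrad₁, ?_⟩
  calc c * ((2 * B₁.card : ℕ) : ℝ) ^ ((1 : ℝ) / 2 + ε)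
        ≤ c * (3 * n / p) ^ ((1 : ℝ) / 2 + ε) := by gcongr
    _ ≤ c * ((n : ℝ) ^ ((1 : ℝ) / 2 + ε) / (6 * √p)) := by
        gcongr
        exact rpow_three_mul_div_le (by positivity) (by linarith) hε1 hpε
    _ ≤ specRad G / (6 * √p) := by rw [← mul_div_assoc]; gcongr
    _ ≤ specRad (G.comap f) := hrad₁
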